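/- For ε ∈ (0,1/2), let ū_ε = (u_ε)_{(0,1)} = ∫_0^1 u_ε(x) dx. Then ū_ε = 1 + C_ε where C_ε = 2|log ε| ∫_0^ε dx/|log x| - 2ε, and C_ε = o(ε) as ε → 0+, i.e., lim_{ε→0+} C_ε/ε = 0. In particular ū_ε → 1 as ε → 0+. -/

import Mathlib

open MeasureTheory Set Filter Topology

/-- The log-type cut-off functions `u_ε` on `(0,1)`. -/
noncomputable def uEps (ε : ℝ) : ℝ → ℝ := fun x =>
  if x < ε then |Real.log ε| / |Real.log x|
  else if x ≤ 1 - ε then 1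
  else |Real.log ε| / |Real.log (1 - x)|

/-- The correction term `C_ε = 2|log ε| ∫_0^ε dx/|log x| - 2ε`. -/
noncomputable def Ceps (ε : ℝ) : ℝ :=
  2 * |Real.log ε| * (∫ x in Ioo (0 : ℝ) ε, 1 / |Real.log x|) - 2 * ε

noncomputable def Ieps (ε : ℝ) : ℝ := ∫ x in Ioo (0 : ℝ) ε, 1 / |Real.log x|

lemma abs_log_le {x ε : ℝ} (hx : x ∈ Ioo 0 ε) (hε : ε < 1) :
    |Real.log ε| ≤ |Real.log x| := by
  have h1 : Real.log x < Real.log ε := Real.log_lt_log hx.1 hx.2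
  have h2 : Real.log ε < 0 := Real.log_neg (hx.1.trans hx.2) hε
  rw [abs_of_neg h2, abs_of_neg (h1.trans h2)]
  linarith

lemma abs_log_pos {ε : ℝ} (h0 : 0 < ε) (h1 : ε < 1) : 0 < |Real.log ε| := by
  have := Real.log_neg h0 h1
  rw [abs_of_neg this]; linarith

lemma meas_invAbsLog : Measurable fun x : ℝ => 1 / |Real.log x| :=
  measurable_const.div Real.measurable_log.abs

lemma integrableOn_invLog {ε : ℝ} (h0 : 0 < ε) (h1 : ε < 1) :
    IntegrableOn (fun x => 1 / |Real.log x|) (Ioo 0 ε) := by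
  apply Measure.integrableOn_of_bounded (M := 1 / |Real.log ε|)
  · simp [Real.volume_Ioo]
  · exact meas_invAbsLog.aestronglyMeasurable
  · filter_upwards [ae_restrict_mem measurableSet_Ioo] with x hx
    have hεpos := abs_log_pos h0 h1
    have hle := abs_log_le hx h1
    rw [Real.norm_eq_abs, abs_of_nonneg (by positivity)]
    exact one_div_le_one_div_of_le hεpos hle

lemma keyU {ε : ℝ} (h0 : 0 < ε) (h1 : ε < 1) : |Real.log ε| * Ieps ε ≤ ε := by
  have hεpos := abs_log_pos h0 h1
  have hI : Ieps ε ≤ ε * (1 / |Real.log ε|) := by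
    have : Ieps ε ≤ ∫ _x in Ioo (0:ℝ) ε, (1 / |Real.log ε|) := by
      apply setIntegral_mono_on (integrableOn_invLog h0 h1)
        (integrableOn_const (by simp [Real.volume_Ioo]))
        measurableSet_Ioo
      intro x hx
      exact one_div_le_one_div_of_le hεpos (abs_log_le hx h1)
    calc Ieps ε ≤ _ := this
      _ = ε * (1 / |Real.log ε|) := by
        rw [setIntegral_const, measureReal_def, Real.volume_Ioo, smul_eq_mul,
          ENNReal.toReal_ofReal (by linarith)]
        ring
  calc |Real.log ε| * Ieps ε ≤ |Real.log ε| * (ε * (1 / |Real.log ε|)) := by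
        exact mul_le_mul_of_nonneg_left hI hεpos.le
    _ = ε := by field_simp

lemma keyL {ε δ : ℝ} (h0 : 0 < ε) (h1 : ε < 1) (hδ : 0 < δ) :
    ε * (1 - ε ^ δ) / (1 + δ) ≤ |Real.log ε| * Ieps ε := by
  have hεpos := abs_log_pos h0 h1
  set a : ℝ := ε ^ (1 + δ) with ha
  have ha0 : 0 < a := Real.rpow_pos_of_pos h0 _
  have haε : a < ε := by
    calc a < ε ^ (1:ℝ) := Real.rpow_lt_rpow_of_exponent_gt h0 h1 (by linarith)
      _ = ε := Real.rpow_one ε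
  -- on Ioo a ε, |log x| ≤ (1+δ)|log ε|
  have hbound : ∀ x ∈ Ioo a ε, 1 / ((1 + δ) * |Real.log ε|) ≤ 1 / |Real.log x| := by
    intro x hx
    have hx0 : 0 < x := ha0.trans hx.1
    have hlx : Real.log x < 0 := Real.log_neg hx0 (hx.2.trans h1)
    have hla : Real.log a ≤ Real.log x := (Real.log_lt_log ha0 hx.1).le
    have hloga : Real.log a = (1 + δ) * Real.log ε := Real.log_rpow h0 _
    have hlε : Real.log ε < 0 := Real.log_neg h0 h1
    have : |Real.log x| ≤ (1 + δ) * |Real.log ε| := by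
      rw [abs_of_neg hlx, abs_of_neg hlε]
      rw [hloga] at hla
      nlinarith
    exact one_div_le_one_div_of_le (by rw [abs_of_neg hlx]; linarith) this
  have hIineq : (ε - a) * (1 / ((1 + δ) * |Real.log ε|)) ≤ Ieps ε := by
    have hsub : (∫ x in Ioo a ε, 1 / |Real.log x|) ≤ Ieps ε := by
      apply setIntegral_mono_set (integrableOn_invLog h0 h1)
      · filter_upwards [ae_restrict_mem measurableSet_Ioo] with x hx
        positivity
      · exact Eventually.of_forall (fun x hx => ⟨ha0.trans hx.1, hx.2⟩)
    have hconst : (ε - a) * (1 / ((1 + δ) * |Real.log ε|)) ≤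
        ∫ x in Ioo a ε, 1 / |Real.log x| := by
      have hint : IntegrableOn (fun x => 1 / |Real.log x|) (Ioo a ε) :=
        (integrableOn_invLog h0 h1).mono_set
          (fun x hx => ⟨ha0.trans hx.1, hx.2⟩)
      have := setIntegral_mono_on
        (f := fun _ => 1 / ((1 + δ) * |Real.log ε|))
        (integrableOn_const (by simp [Real.volume_Ioo]))
        hint measurableSet_Ioo hbound
      calc (ε - a) * (1 / ((1 + δ) * |Real.log ε|))
          = ∫ _x in Ioo a ε, (1 / ((1 + δ) * |Real.log ε|)) := by
            rw [setIntegral_const, measureReal_def, Real.volume_Ioo, smul_eq_mul,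
              ENNReal.toReal_ofReal (by linarith)]
        _ ≤ _ := this
    linarith
  have hrw : ε - a = ε * (1 - ε ^ δ) := by
    rw [ha, Real.rpow_add h0, Real.rpow_one]; ring
  calc ε * (1 - ε ^ δ) / (1 + δ)
      = |Real.log ε| * ((ε - a) * (1 / ((1 + δ) * |Real.log ε|))) := by
        rw [hrw]; field_simp
    _ ≤ |Real.log ε| * Ieps ε := mul_le_mul_of_nonneg_left hIineq hεpos.le

lemma uEps_measurable (ε : ℝ) : Measurable (uEps ε) := by
  unfold uEps
  apply Measurable.ite (measurableSet_lt measurable_id measurable_const)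
  · exact measurable_const.div Real.measurable_log.abs
  · apply Measurable.ite (measurableSet_le measurable_id measurable_const)
      measurable_const
    exact measurable_const.div ((Real.measurable_log.comp
      (measurable_const.sub measurable_id)).abs)

lemma uEps_bound {ε x : ℝ} (h0 : 0 < ε) (h1 : ε < 1/2) (hx : x ∈ Ioo (0:ℝ) 1) :
    |uEps ε x| ≤ 1 := by
  have hε1 : ε < 1 := by linarith
  unfold uEps
  split_ifs with hc1 hc2
  · have hxIoo : x ∈ Ioo 0 ε := ⟨hx.1, hc1⟩
    have := abs_log_le hxIoo hε1
    have hεpos := abs_log_pos h0 hε1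
    rw [abs_of_nonneg (by positivity)]
    rw [div_le_one (by linarith)]; exact this
  · simp
  · push_neg at hc1 hc2
    have hy : (1 - x) ∈ Ioo 0 ε := ⟨by linarith [hx.2], by linarith⟩
    have := abs_log_le hy hε1
    have hεpos := abs_log_pos h0 hε1
    rw [abs_of_nonneg (by positivity)]
    rw [div_le_one (by linarith)]; exact this

lemma uEps_integrableOn {ε : ℝ} (h0 : 0 < ε) (h1 : ε < 1/2) :
    IntegrableOn (uEps ε) (Ioo (0:ℝ) 1) := by
  apply Measure.integrableOn_of_bounded (M := 1)
  · simp [Real.volume_Ioo]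
  · exact (uEps_measurable ε).aestronglyMeasurable
  · filter_upwards [ae_restrict_mem measurableSet_Ioo] with x hx
    exact uEps_bound h0 h1 hx

lemma integral_identity {ε : ℝ} (hε : ε ∈ Ioo (0:ℝ) (1/2)) :
    (∫ x in Ioo (0 : ℝ) 1, uEps ε x) = 1 + Ceps ε := by
  obtain ⟨h0, h1⟩ := hε
  have hε1 : ε < 1 := by linarith
  have hεhalf : ε < 1 - ε := by linarith
  -- split the domain
  have hset : Ioo (0:ℝ) 1 = Ioo 0 ε ∪ (Icc ε (1-ε) ∪ Ioo (1-ε) 1) := by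
    ext x
    simp only [mem_Ioo, mem_union, mem_Icc]
    constructor
    · rintro ⟨hx0, hx1⟩
      rcases lt_or_ge x ε with h | h
      · exact Or.inl ⟨hx0, h⟩
      rcases le_or_gt x (1-ε) with h' | h'
      · exact Or.inr (Or.inl ⟨h, h'⟩)
      · exact Or.inr (Or.inr ⟨h', hx1⟩)
    · rintro (⟨ha, hb⟩ | ⟨ha, hb⟩ | ⟨ha, hb⟩) <;> constructor <;> linarith
  have hInt := uEps_integrableOn h0 h1
  have hIA : IntegrableOn (uEps ε) (Ioo 0 ε) :=
    hInt.mono_set (by rw [hset]; exact subset_union_left)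
  have hIB : IntegrableOn (uEps ε) (Icc ε (1-ε)) :=
    hInt.mono_set (by rw [hset]; exact subset_union_of_subset_right subset_union_left _)
  have hIC : IntegrableOn (uEps ε) (Ioo (1-ε) 1) :=
    hInt.mono_set (by rw [hset]; exact subset_union_of_subset_right subset_union_right _)
  have hd1 : Disjoint (Ioo (0:ℝ) ε) (Icc ε (1-ε) ∪ Ioo (1-ε) 1) := by
    rw [Set.disjoint_left]
    rintro x ⟨_, hx⟩ (⟨h, _⟩ | ⟨h, _⟩) <;> linarith
  have hd2 : Disjoint (Icc ε (1-ε)) (Ioo (1-ε) 1) := by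
    rw [Set.disjoint_left]
    rintro x ⟨_, hx⟩ ⟨h, _⟩; linarith
  rw [hset, setIntegral_union hd1 ((measurableSet_Icc).union measurableSet_Ioo)
      hIA (hIB.union hIC),
    setIntegral_union hd2 measurableSet_Ioo hIB hIC]
  -- piece A
  have hA : (∫ x in Ioo (0:ℝ) ε, uEps ε x) = |Real.log ε| * Ieps ε := by
    rw [show |Real.log ε| * Ieps ε = ∫ x in Ioo (0:ℝ) ε, |Real.log ε| * (1 / |Real.log x|) by
      rw [MeasureTheory.integral_const_mul]; rfl]
    apply setIntegral_congr_fun measurableSet_Ioo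
    intro x hx
    show (if x < ε then |Real.log ε| / |Real.log x| else _) = |Real.log ε| * (1 / |Real.log x|)
    rw [if_pos hx.2]; ring
  -- piece B
  have hB : (∫ x in Icc ε (1-ε), uEps ε x) = 1 - 2*ε := by
    rw [show (∫ x in Icc ε (1-ε), uEps ε x) = ∫ _x in Icc ε (1-ε), (1:ℝ) from
      setIntegral_congr_fun measurableSet_Icc (fun x hx => by
        simp only [uEps, if_neg (not_lt.2 hx.1), if_pos hx.2])]
    rw [setIntegral_const, measureReal_def, Real.volume_Icc, smul_eq_mul,
      ENNReal.toReal_ofReal (by linarith)]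
    ring
  -- piece C
  have hC : (∫ x in Ioo (1-ε) 1, uEps ε x) = |Real.log ε| * Ieps ε := by
    have hcongr : (∫ x in Ioo (1-ε) 1, uEps ε x)
        = ∫ x in Ioo (1-ε) 1, |Real.log ε| / |Real.log (1 - x)| := by
      apply setIntegral_congr_fun measurableSet_Ioo
      intro x hx
      have h1' : ¬ (x < ε) := not_lt.2 (by linarith [hx.1])
      have h2' : ¬ (x ≤ 1 - ε) := not_le.2 hx.1
      simp only [uEps, if_neg h1', if_neg h2']
    rw [hcongr]
    have : (∫ x in Ioo (1-ε) 1, |Real.log ε| / |Real.log (1 - x)|)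
        = ∫ x in Ioo (0:ℝ) ε, |Real.log ε| / |Real.log x| := by
      rw [← integral_Ioc_eq_integral_Ioo, ← integral_Ioc_eq_integral_Ioo,
        ← intervalIntegral.integral_of_le (by linarith : (1:ℝ)-ε ≤ 1),
        ← intervalIntegral.integral_of_le h0.le]
      have := intervalIntegral.integral_comp_sub_left
        (a := 1-ε) (b := 1) (fun y => |Real.log ε| / |Real.log y|) 1
      simpa using this
    rw [this]
    rw [show |Real.log ε| * Ieps ε = ∫ x in Ioo (0:ℝ) ε, |Real.log ε| * (1 / |Real.log x|) by
      rw [MeasureTheory.integral_const_mul]; rfl]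
    apply setIntegral_congr_fun measurableSet_Ioo
    intro x _
    show |Real.log ε| / |Real.log x| = |Real.log ε| * (1 / |Real.log x|)
    ring
  rw [hA, hB, hC]
  unfold Ceps
  unfold Ieps
  ring

lemma tendsto_key : Tendsto (fun ε => |Real.log ε| * Ieps ε / ε) (𝓝[>] (0:ℝ)) (𝓝 1) := by
  rw [Metric.tendsto_nhds]
  intro η hη
  set δ := η / 2 with hδdef
  have hδ : 0 < δ := by positivity
  have hpow : Tendsto (fun ε : ℝ => ε ^ δ) (𝓝[>] (0:ℝ)) (𝓝 0) := by
    have hc : ContinuousAt (fun x : ℝ => x ^ δ) 0 :=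
      Real.continuousAt_rpow_const 0 δ (Or.inr hδ.le)
    have h := hc.tendsto
    rw [Real.zero_rpow hδ.ne'] at h
    exact h.mono_left nhdsWithin_le_nhds
  have h1 : ∀ᶠ ε in 𝓝[>] (0:ℝ), ε ^ δ < η / 2 :=
    hpow.eventually_lt_const (by positivity)
  have h2 : Ioo (0:ℝ) 1 ∈ 𝓝[>] (0:ℝ) := Ioo_mem_nhdsGT_of_mem ⟨le_refl _, one_pos⟩
  filter_upwards [h1, h2] with ε hεδ hε
  obtain ⟨h0, hε1⟩ := hε
  rw [Real.dist_eq, abs_lt]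
  have hU : |Real.log ε| * Ieps ε / ε ≤ 1 := by
    rw [div_le_one h0]; exact keyU h0 hε1
  have hL : (1 - ε ^ δ) / (1 + δ) ≤ |Real.log ε| * Ieps ε / ε := by
    have h := keyL h0 hε1 hδ
    have hrw : ε * (1 - ε ^ δ) / (1 + δ) / ε = (1 - ε ^ δ) / (1 + δ) := by
      field_simp
    rw [← hrw]
    gcongr
  have hkey : 1 - η < (1 - ε ^ δ) / (1 + δ) := by
    rw [lt_div_iff₀ (by positivity)]
    nlinarith
  constructor <;> linarith

/-- The average `ū_ε = ∫_0^1 u_ε` equals `1 + C_ε`, where `C_ε = o(ε)` as `ε → 0+`;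
in particular `ū_ε → 1`. -/
theorem average_uEps :
    (∀ ε ∈ Ioo (0 : ℝ) (1 / 2), (∫ x in Ioo (0 : ℝ) 1, uEps ε x) = 1 + Ceps ε) ∧
    Tendsto (fun ε => Ceps ε / ε) (𝓝[>] (0 : ℝ)) (𝓝 0) ∧
    Tendsto (fun ε => ∫ x in Ioo (0 : ℝ) 1, uEps ε x) (𝓝[>] (0 : ℝ)) (𝓝 1) := by
  have hC : Tendsto (fun ε => Ceps ε / ε) (𝓝[>] (0 : ℝ)) (𝓝 0) := by
    have h := (tendsto_key.const_mul 2).sub_const 2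
    norm_num at h
    apply h.congr'
    filter_upwards [self_mem_nhdsWithin] with ε (hε : 0 < ε)
    unfold Ceps Ieps
    field_simp
  refine ⟨fun ε hε => integral_identity hε, hC, ?_⟩
  have hC0 : Tendsto (fun ε => Ceps ε) (𝓝[>] (0 : ℝ)) (𝓝 0) := by
    have hid : Tendsto (fun ε : ℝ => ε) (𝓝[>] (0:ℝ)) (𝓝 0) :=
      tendsto_id.mono_left nhdsWithin_le_nhds
    have := hC.mul hid
    rw [zero_mul] at this
    apply this.congr'
    filter_upwards [self_mem_nhdsWithin] with ε (hε : 0 < ε)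
    field_simp
  have h1 : Tendsto (fun ε => 1 + Ceps ε) (𝓝[>] (0 : ℝ)) (𝓝 1) := by
    have := hC0.const_add 1
    simpa using this
  apply h1.congr'
  filter_upwards [Ioo_mem_nhdsGT_of_mem (by constructor <;> norm_num :
    (0:ℝ) ∈ Ico (0:ℝ) (1/2))] with ε hε
  exact (integral_identity hε).symm
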